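/- For the exceptional Laguerre family, define D_1 = (x(3α−x+10)/42) d^2/dx^2 + ((3α^3−α^2x−3αx^2+x^3+13α^2−5αx−10x^2+10α−10x)/(42(α+x))) d/dx − (α^3−αx^2+5α^2−3αx+10α−10x)/(42(α+x)). Then for every n ≥ 1 and α > 0, (α+x)·(D_1 r_n)(x) lies in the span of (α+x) r_{n-1}, (α+x) r_n, (α+x) r_{n+1}, and the coefficient of r_n equals (n−1)(n−5)/21. -/
import Mathlib


open Polynomial MeasureTheory

/-- Classical (generalized) Laguerre polynomials
`L_n^{(α)}(x) = Σ_{k=0}^n (-1)^k C(n+α, n-k) x^k / k!`. -/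
noncomputable def laguerreP (α : ℝ) (n : ℕ) : Polynomial ℝ :=
  ∑ k ∈ Finset.range (n + 1),
    C ((-1 : ℝ) ^ k *
        (∏ i ∈ Finset.range (n - k), (α + (k : ℝ) + 1 + (i : ℝ))) /
        ((Nat.factorial (n - k) : ℝ) * (Nat.factorial k : ℝ))) * X ^ k

/-- `L_k^{(α)}` extended by `0` for `k < 0`. -/
noncomputable def Lz (α : ℝ) (k : ℤ) : Polynomial ℝ :=
  if k < 0 then 0 else laguerreP α k.toNat

/-- Exceptional Laguerre polynomials `r_n = -(x+α+1) L_{n-1}^{(α)} + L_{n-2}^{(α)}`. -/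
noncomputable def rE (α : ℝ) (k : ℤ) : Polynomial ℝ :=
  -(X + C (α + 1)) * Lz α (k - 1) + Lz α (k - 2)

noncomputable def lagC (α : ℝ) (m k : ℕ) : ℝ :=
  (-1 : ℝ) ^ k * (∏ i ∈ Finset.range (m - k), (α + (k : ℝ) + 1 + (i : ℝ))) /
    ((Nat.factorial (m - k) : ℝ) * (Nat.factorial k : ℝ))

lemma lag_coeff (α : ℝ) (m k : ℕ) :
    (laguerreP α m).coeff k = if k ≤ m then lagC α m k else 0 := by
  simp [laguerreP, lagC, Polynomial.finset_sum_coeff, Polynomial.coeff_C_mul,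
    Polynomial.coeff_X_pow, Finset.sum_ite_eq', Nat.lt_succ_iff]

lemma coeff_X_mul_deriv (p : Polynomial ℝ) (k : ℕ) :
    (X * derivative p).coeff k = k * p.coeff k := by
  cases k with
  | zero => simp
  | succ k =>
    rw [Polynomial.coeff_X_mul, Polynomial.coeff_derivative]
    push_cast; ring

lemma key1 (α : ℝ) (m k : ℕ) (h : k ≤ m) :
    ((m:ℝ) + 1 - k) * lagC α (m+1) k = ((m:ℝ) + 1 + α) * lagC α m k := by
  obtain ⟨j, rfl⟩ : ∃ j, m = k + j := ⟨m - k, by omega⟩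
  simp only [lagC, show k + j + 1 - k = j + 1 from by omega,
    show k + j - k = j from by omega, Finset.prod_range_succ, Nat.factorial_succ]
  have h1 : (j.factorial : ℝ) ≠ 0 := Nat.cast_ne_zero.mpr j.factorial_ne_zero
  have h2 : (k.factorial : ℝ) ≠ 0 := Nat.cast_ne_zero.mpr k.factorial_ne_zero
  push_cast
  field_simp
  ring

lemma key2 (α : ℝ) (m k : ℕ) (h : k + 1 ≤ m) :
    ((k:ℝ)+1) * lagC α m (k+1) + ((m:ℝ)+1+α) * lagC α m (k+1)
      - ((m:ℝ)+1) * lagC α (m+1) (k+1) = lagC α m k := by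
  obtain ⟨j, rfl⟩ : ∃ j, m = k + 1 + j := ⟨m - k - 1, by omega⟩
  have e1 : k + 1 + j - (k + 1) = j := by omega
  have e2 : k + 1 + j + 1 - (k + 1) = j + 1 := by omega
  have e3 : k + 1 + j - k = j + 1 := by omega
  have hp : (∏ i ∈ Finset.range (j+1), (α + (k:ℝ) + 1 + (i:ℝ)))
      = (α + (k:ℝ) + 1) * ∏ i ∈ Finset.range j, (α + ((k+1:ℕ):ℝ) + 1 + (i:ℝ)) := by
    rw [Finset.prod_range_succ']
    rw [Finset.prod_congr rfl (fun i (_ : i ∈ Finset.range j) => by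
      show α + (k:ℝ) + 1 + ((i+1:ℕ):ℝ) = α + ((k+1:ℕ):ℝ) + 1 + (i:ℝ)
      push_cast; ring)]
    push_cast; ring
  simp only [lagC, e1, e2, e3]
  rw [hp, Finset.prod_range_succ]
  simp only [Nat.factorial_succ, pow_succ]
  have h1 : (j.factorial : ℝ) ≠ 0 := Nat.cast_ne_zero.mpr j.factorial_ne_zero
  have h2 : (k.factorial : ℝ) ≠ 0 := Nat.cast_ne_zero.mpr k.factorial_ne_zero
  push_cast
  field_simp
  ring

lemma key3 (α : ℝ) (m : ℕ) :
    ((m:ℝ)+1) * lagC α (m+1) (m+1) + lagC α m m = 0 := by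
  simp only [lagC, Nat.sub_self, Finset.range_zero, Finset.prod_empty,
    Nat.factorial_zero, Nat.factorial_succ, pow_succ]
  have h2 : (m.factorial : ℝ) ≠ 0 := Nat.cast_ne_zero.mpr m.factorial_ne_zero
  push_cast
  field_simp
  ring

lemma lemAnat (α : ℝ) (m : ℕ) :
    X * derivative (laguerreP α (m+1))
      = C ((m:ℝ)+1) * laguerreP α (m+1) - (C ((m:ℝ)+1) + C α) * laguerreP α m := by
  ext k
  rw [coeff_X_mul_deriv]
  simp only [add_mul, Polynomial.coeff_sub, Polynomial.coeff_add,
    Polynomial.coeff_C_mul, lag_coeff]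
  rcases le_or_gt k m with hk | hk
  · rw [if_pos hk, if_pos (by omega : k ≤ m + 1)]
    have := key1 α m k hk
    linear_combination -this
  · rcases eq_or_lt_of_le (by omega : m + 1 ≤ k) with hk2 | hk2
    · rw [if_neg (by omega : ¬ k ≤ m), ← hk2, if_pos le_rfl]
      push_cast; ring
    · rw [if_neg (by omega : ¬ k ≤ m), if_neg (by omega : ¬ k ≤ m + 1)]
      ring

lemma lemBnat (α : ℝ) (m : ℕ) :
    X * derivative (laguerreP α m)
      = C ((m:ℝ)+1) * laguerreP α (m+1)
        + (X - (C ((m:ℝ)+1) + C α)) * laguerreP α m := by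
  ext k
  rw [coeff_X_mul_deriv]
  simp only [sub_mul, add_mul, Polynomial.coeff_sub, Polynomial.coeff_add,
    Polynomial.coeff_C_mul, lag_coeff]
  cases k with
  | zero =>
    have hx0 : (X * laguerreP α m).coeff 0 = 0 := by
      rw [Polynomial.mul_coeff_zero]; simp
    rw [hx0, if_pos (Nat.zero_le m), if_pos (Nat.zero_le (m+1))]
    have := key1 α m 0 (Nat.zero_le m)
    push_cast at this ⊢
    linear_combination -this
  | succ k =>
    rw [Polynomial.coeff_X_mul, lag_coeff]
    rcases le_or_gt (k+1) m with hk | hk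
    · rw [if_pos hk, if_pos (by omega : k + 1 ≤ m + 1), if_pos (by omega : k ≤ m)]
      have := key2 α m k hk
      push_cast at this ⊢
      linear_combination this
    · rcases eq_or_lt_of_le (by omega : m ≤ k) with hk2 | hk2
      · subst hk2
        rw [if_neg (by omega : ¬ m + 1 ≤ m), if_pos le_rfl, if_pos le_rfl]
        have := key3 α m
        push_cast at this ⊢
        linear_combination -this
      · rw [if_neg (by omega : ¬ k + 1 ≤ m), if_neg (by omega : ¬ k + 1 ≤ m + 1),
          if_neg (by omega : ¬ k ≤ m)]
        ring

lemma lag0 (α : ℝ) : laguerreP α 0 = 1 := by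
  simp [laguerreP]

lemma Lz_natCast (α : ℝ) (m : ℕ) : Lz α (m : ℤ) = laguerreP α m := by
  simp [Lz]

lemma Lz_neg (α : ℝ) (k : ℤ) (h : k < 0) : Lz α k = 0 := if_pos h

lemma LA (α : ℝ) (k : ℤ) (hk : 0 ≤ k) :
    X * derivative (Lz α k)
      = C (k:ℝ) * Lz α k - (C (k:ℝ) + C α) * Lz α (k-1) := by
  obtain ⟨m, rfl⟩ := Int.eq_ofNat_of_zero_le hk
  cases m with
  | zero =>
    have h0 : Lz α ((0:ℕ):ℤ) = 1 := by rw [Lz_natCast, lag0]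
    rw [h0, show (((0:ℕ):ℤ) - 1) = (-1:ℤ) from by norm_num, Lz_neg α (-1) (by norm_num)]
    simp
  | succ m =>
    rw [show ((m+1:ℕ):ℤ) - 1 = (m:ℤ) from by push_cast; ring, Lz_natCast, Lz_natCast]
    have := lemAnat α m
    push_cast
    linear_combination this

lemma LB (α : ℝ) (k : ℤ) (hk : 0 ≤ k) :
    X * derivative (Lz α k)
      = (C (k:ℝ) + 1) * Lz α (k+1)
        + (X - (C (k:ℝ) + 1 + C α)) * Lz α k := by
  obtain ⟨m, rfl⟩ := Int.eq_ofNat_of_zero_le hk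
  rw [show ((m:ℕ):ℤ) + 1 = ((m+1:ℕ):ℤ) from by push_cast; ring, Lz_natCast, Lz_natCast]
  have := lemBnat α m
  simp only [map_add, map_one] at this
  push_cast
  linear_combination this

lemma LC (α : ℝ) (k : ℤ) (hk : 0 ≤ k) :
    (C (k:ℝ) + 1) * Lz α (k+1)
      = (2 * C (k:ℝ) + 1 + C α - X) * Lz α k - (C (k:ℝ) + C α) * Lz α (k-1) := by
  linear_combination LA α k hk - LB α k hk


set_option maxHeartbeats 2000000 in
/-- the operator `D_1` acts tridiagonally on the exceptional Laguerre
family with diagonal coefficient `(n-1)(n-5)/21` (polynomial identity after clearing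
the denominator `α+x`). -/
theorem exceptional_laguerre_D1 (α : ℝ) (hα : 0 < α) (n : ℕ) (hn : 1 ≤ n) :
    ∃ a b : ℝ,
      C (1 / 42) * (X * (C (3 * α + 10) - X)) * (X + C α) *
          derivative (derivative (rE α (n : ℤ)))
        + C (1 / 42) * (C (3 * α ^ 3 + 13 * α ^ 2 + 10 * α)
            + C (-(α ^ 2 + 5 * α + 10)) * X + C (-(3 * α + 10)) * X ^ 2 + X ^ 3) *
          derivative (rE α (n : ℤ))
        - C (1 / 42) * (C (α ^ 3 + 5 * α ^ 2 + 10 * α)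
            + C (-(3 * α + 10)) * X + C (-α) * X ^ 2) * rE α (n : ℤ)
      = (X + C α) *
          (C a * rE α ((n : ℤ) - 1)
            + C (((n : ℝ) - 1) * ((n : ℝ) - 5) / 21) * rE α (n : ℤ)
            + C b * rE α ((n : ℤ) + 1)) := by
  refine ⟨-(((n:ℝ) + α) * (((n:ℝ) + α) - 2)) * (1/42),
          -((n:ℝ) * ((n:ℝ) + α)) * (1/42), ?_⟩
  have hn1 : (0:ℤ) ≤ (n:ℤ) - 1 := by omega
  have H1 := LA α ((n:ℤ) - 1) hn1
  rw [show (n:ℤ) - 1 - 1 = (n:ℤ) - 2 from by ring] at H1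
  push_cast at H1
  have H2 : X * derivative (Lz α ((n:ℤ) - 2))
      = C ((n:ℝ) - 1) * Lz α ((n:ℤ) - 1)
        + (X - (C ((n:ℝ) - 1) + C α)) * Lz α ((n:ℤ) - 2) := by
    rcases Nat.lt_or_ge n 2 with h2 | h2
    · obtain rfl : n = 1 := by omega
      rw [Lz_neg α (((1:ℕ):ℤ) - 2) (by norm_num)]
      have hc : C (((1:ℕ):ℝ) - 1) = (0 : Polynomial ℝ) := by
        push_cast; norm_num
      rw [hc]
      simp
    · have h := LB α ((n:ℤ) - 2) (by omega)
      rw [show (n:ℤ) - 2 + 1 = (n:ℤ) - 1 from by ring] at h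
      push_cast at h
      simp only [map_sub, map_add, map_one, map_ofNat] at h ⊢
      linear_combination h
  have H3 := congrArg derivative H1
  simp only [derivative_mul, derivative_add, derivative_sub, derivative_neg,
    derivative_X, derivative_C, derivative_one, one_mul, mul_one, zero_mul,
    mul_zero, zero_add, add_zero, sub_zero, zero_sub] at H3
  have H4 := congrArg derivative H2
  simp only [derivative_mul, derivative_add, derivative_sub, derivative_neg,
    derivative_X, derivative_C, derivative_one, one_mul, mul_one, zero_mul,
    mul_zero, zero_add, add_zero, sub_zero, zero_sub] at H4
  have H5 := LC α ((n:ℤ) - 1) hn1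
  rw [show (n:ℤ) - 1 + 1 = (n:ℤ) from by ring,
      show (n:ℤ) - 1 - 1 = (n:ℤ) - 2 from by ring] at H5
  push_cast at H5
  have H6 : (C ((n:ℝ) - 2) + C α) * Lz α ((n:ℤ) - 3)
      = (2 * C ((n:ℝ) - 2) + 1 + C α - X) * Lz α ((n:ℤ) - 2)
        - (C ((n:ℝ) - 2) + 1) * Lz α ((n:ℤ) - 1) := by
    rcases Nat.lt_or_ge n 2 with h2 | h2
    · obtain rfl : n = 1 := by omega
      rw [Lz_neg α (((1:ℕ):ℤ) - 3) (by norm_num),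
          Lz_neg α (((1:ℕ):ℤ) - 2) (by norm_num)]
      have hc : C (((1:ℕ):ℝ) - 2) + 1 = (0 : Polynomial ℝ) := by
        rw [show ((1:ℕ):ℝ) - 2 = -1 from by push_cast; norm_num,
            show (1 : Polynomial ℝ) = C 1 from (map_one C).symm, ← map_add]
        norm_num
      rw [hc]
      simp
    · have h := LC α ((n:ℤ) - 2) (by omega)
      rw [show (n:ℤ) - 2 + 1 = (n:ℤ) - 1 from by ring,
          show (n:ℤ) - 2 - 1 = (n:ℤ) - 3 from by ring] at h
      push_cast at h
      linear_combination h
  have e1 : rE α (n:ℤ) = -(X + C (α + 1)) * Lz α ((n:ℤ) - 1) + Lz α ((n:ℤ) - 2) := rfl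
  have e2 : rE α ((n:ℤ) + 1) = -(X + C (α + 1)) * Lz α (n:ℤ) + Lz α ((n:ℤ) - 1) := by
    rw [rE, show (n:ℤ) + 1 - 1 = (n:ℤ) from by ring,
        show (n:ℤ) + 1 - 2 = (n:ℤ) - 1 from by ring]
  have e3 : rE α ((n:ℤ) - 1) = -(X + C (α + 1)) * Lz α ((n:ℤ) - 2) + Lz α ((n:ℤ) - 3) := by
    rw [rE, show (n:ℤ) - 1 - 1 = (n:ℤ) - 2 from by ring,
        show (n:ℤ) - 1 - 2 = (n:ℤ) - 3 from by ring]
  rw [e1, e2, e3]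
  rw [show ((n:ℝ) - 1) * ((n:ℝ) - 5) / 21 = (((n:ℝ) - 1) * ((n:ℝ) - 5)) * (1/21) from by ring]
  simp only [derivative_add, derivative_sub, derivative_mul, derivative_neg,
    derivative_X, derivative_C, derivative_one, one_mul, mul_one, zero_mul,
    mul_zero, zero_add, add_zero, sub_zero, zero_sub, neg_neg, neg_mul, mul_neg]
  have h42 : (42 : Polynomial ℝ) * C ((1:ℝ)/42) = 1 := by
    rw [show ((42 : Polynomial ℝ)) = C (42:ℝ) from (map_ofNat C 42).symm, ← map_mul]
    norm_num
  have h21 : (21 : Polynomial ℝ) * C ((1:ℝ)/21) = 1 := by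
    rw [show ((21 : Polynomial ℝ)) = C (21:ℝ) from (map_ofNat C 21).symm, ← map_mul]
    norm_num
  have h42X : ((42 : Polynomial ℝ) * X) ≠ 0 := by
    refine mul_ne_zero ?_ Polynomial.X_ne_zero
    rw [show ((42 : Polynomial ℝ)) = C (42:ℝ) from (map_ofNat C 42).symm]
    exact Polynomial.C_ne_zero.mpr (by norm_num)
  refine mul_left_cancel₀ h42X ?_
  simp only [map_add, map_mul, map_sub, map_neg, map_pow, map_one, map_ofNat] at H1 H2 H3 H4 H5 H6 ⊢
  linear_combination
      (-X^4 + (2)*X^3*(C α) + X^3*(C (n:ℝ)) + (9)*X^3 + (4)*X^2*(C α)^2 - X^2*(C α)*(C (n:ℝ)) + (16)*X^2*(C α) + (-10)*X^2*(C (n:ℝ)) + (19)*X^2 + (-2)*X*(C α)^3 + (-5)*X*(C α)^2*(C (n:ℝ)) + (-3)*X*(C α)^2 + (-20)*X*(C α)*(C (n:ℝ)) + (27)*X*(C α) + (20)*X + (-3)*(C α)^4 + (-3)*(C α)^3*(C (n:ℝ)) + (-10)*(C α)^3 + (-10)*(C α)^2*(C (n:ℝ))) * H1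
      + (-X^3*(C α) - X^3*(C (n:ℝ)) + X^3 + X^2*(C α)^2 + X^2*(C α)*(C (n:ℝ)) + (8)*X^2*(C α) + (10)*X^2*(C (n:ℝ)) + (-9)*X^2 + (5)*X*(C α)^3 + (5)*X*(C α)^2*(C (n:ℝ)) + (17)*X*(C α)^2 + (20)*X*(C α)*(C (n:ℝ)) + (-17)*X*(C α) + (-20)*X + (3)*(C α)^4 + (3)*(C α)^3*(C (n:ℝ)) + (10)*(C α)^3 + (10)*(C α)^2*(C (n:ℝ))) * H2
      + (X^4 - X^3*(C α) + (-9)*X^3 + (-5)*X^2*(C α)^2 + (-22)*X^2*(C α) + (-10)*X^2 + (-3)*X*(C α)^3 + (-13)*X*(C α)^2 + (-10)*X*(C α)) * H3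
      + (-X^3 + (2)*X^2*(C α) + (10)*X^2 + (3)*X*(C α)^2 + (10)*X*(C α)) * H4
      + (-X^3*(C α) - X^3*(C (n:ℝ)) + (-2)*X^2*(C α)^2 + (-2)*X^2*(C α)*(C (n:ℝ)) - X^2*(C α) - X^2*(C (n:ℝ)) - X*(C α)^3 - X*(C α)^2*(C (n:ℝ)) - X*(C α)^2 - X*(C α)*(C (n:ℝ))) * H5
      + (X^2*(C α) + X^2*(C (n:ℝ)) + X*(C α)^2 + X*(C α)*(C (n:ℝ))) * H6
      + (-X^5*(derivative (Lz α ((n:ℤ) - 1))) + X^5*(derivative (derivative (Lz α ((n:ℤ) - 1)))) - X^4*(C α)*(Lz α ((n:ℤ) - 1)) + (2)*X^4*(C α)*(derivative (Lz α ((n:ℤ) - 1))) - X^4*(C α)*(derivative (derivative (Lz α ((n:ℤ) - 1)))) - X^4*(Lz α ((n:ℤ) - 1)) + (11)*X^4*(derivative (Lz α ((n:ℤ) - 1))) + X^4*(derivative (Lz α ((n:ℤ) - 2))) + (-9)*X^4*(derivative (derivative (Lz α ((n:ℤ) - 1)))) - X^4*(derivative (derivative (Lz α ((n:ℤ) - 2))))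 - X^3*(C α)^2*(Lz α ((n:ℤ) - 1)) - X^3*(C α)^2*(Lz α ((n:ℤ) - 2)) + (4)*X^3*(C α)^2*(derivative (Lz α ((n:ℤ) - 1))) + (-5)*X^3*(C α)^2*(derivative (derivative (Lz α ((n:ℤ) - 1)))) + (-2)*X^3*(C α)*(C (n:ℝ))*(Lz α ((n:ℤ) - 2)) - X^3*(C α)*(C (n:ℝ))*(Lz α (n:ℤ)) - X^3*(C α)*(Lz α ((n:ℤ) - 1)) + (3)*X^3*(C α)*(Lz α ((n:ℤ) - 2)) + (14)*X^3*(C α)*(derivative (Lz α ((n:ℤ) - 1))) + (-3)*X^3*(C α)*(derivative (Lz α ((n:ℤ) - 2))) + (-22)*X^3*(C α)*(derivative (derivative (Lz α ((n:ℤ) - 1)))) + (2)*X^3*(C α)*(derivative (derivative (Lz α ((n:ℤ) - 2)))) - X^3*(C (n:ℝ))^2*(Lz α ((n:ℤ) - 2)) - X^3*(C (n:ℝ))^2*(Lz α (n:ℤ)) + (2)*X^3*(C (n:ℝ))*(Lz α ((n:ℤ) - 2)) + (-10)*X^3*(derivative (Lz α ((n:ℤ) - 2))) + (-10)*X^3*(derivative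 (derivative (Lz α ((n:ℤ) - 1)))) + (10)*X^3*(derivative (derivative (Lz α ((n:ℤ) - 2)))) + X^2*(C α)^3*(Lz α ((n:ℤ) - 1)) + (-2)*X^2*(C α)^3*(Lz α ((n:ℤ) - 2)) + (-2)*X^2*(C α)^3*(derivative (Lz α ((n:ℤ) - 1))) + (-3)*X^2*(C α)^3*(derivative (derivative (Lz α ((n:ℤ) - 1)))) + (-4)*X^2*(C α)^2*(C (n:ℝ))*(Lz α ((n:ℤ) - 2)) + (-2)*X^2*(C α)^2*(C (n:ℝ))*(Lz α (n:ℤ)) + (3)*X^2*(C α)^2*(Lz α ((n:ℤ) - 1)) + (3)*X^2*(C α)^2*(Lz α ((n:ℤ) - 2)) + (-13)*X^2*(C α)^2*(derivative (Lz α ((n:ℤ) - 1))) - X^2*(C α)^2*(derivative (Lz α ((n:ℤ) - 2))) + (-13)*X^2*(C α)^2*(derivative (derivative (Lz α ((n:ℤ) - 1)))) + (3)*X^2*(C α)^2*(derivative (derivative (Lz α ((n:ℤ) - 2)))) + X^2*(C α)^2*(Lz α ((n:ℤ) - 3)) + (-2)*X^2*(C α)*(C (n:ℝ))^2*(Lz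 α ((n:ℤ) - 2)) + (-2)*X^2*(C α)*(C (n:ℝ))^2*(Lz α (n:ℤ)) + X^2*(C α)*(C (n:ℝ))*(Lz α ((n:ℤ) - 1)) + (2)*X^2*(C α)*(C (n:ℝ))*(Lz α ((n:ℤ) - 2)) - X^2*(C α)*(C (n:ℝ))*(Lz α (n:ℤ)) + (2)*X^2*(C α)*(C (n:ℝ))*(Lz α ((n:ℤ) - 3)) + (2)*X^2*(C α)*(Lz α ((n:ℤ) - 1)) + (5)*X^2*(C α)*(Lz α ((n:ℤ) - 2)) + (-15)*X^2*(C α)*(derivative (Lz α ((n:ℤ) - 1))) + (-5)*X^2*(C α)*(derivative (Lz α ((n:ℤ) - 2))) + (-10)*X^2*(C α)*(derivative (derivative (Lz α ((n:ℤ) - 1)))) + (10)*X^2*(C α)*(derivative (derivative (Lz α ((n:ℤ) - 2)))) + (-2)*X^2*(C α)*(Lz α ((n:ℤ) - 3)) + X^2*(C (n:ℝ))^2*(Lz α ((n:ℤ) - 1)) - X^2*(C (n:ℝ))^2*(Lz α ((n:ℤ) - 2)) - X^2*(C (n:ℝ))^2*(Lz α (n:ℤ)) + X^2*(C (n:ℝ))^2*(Lz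 α ((n:ℤ) - 3)) + (2)*X^2*(C (n:ℝ))*(Lz α ((n:ℤ) - 2)) + (-2)*X^2*(C (n:ℝ))*(Lz α ((n:ℤ) - 3)) + (10)*X^2*(Lz α ((n:ℤ) - 2)) + (10)*X^2*(derivative (Lz α ((n:ℤ) - 1))) + (-10)*X^2*(derivative (Lz α ((n:ℤ) - 2))) + X*(C α)^4*(Lz α ((n:ℤ) - 1)) - X*(C α)^4*(Lz α ((n:ℤ) - 2)) + (-3)*X*(C α)^4*(derivative (Lz α ((n:ℤ) - 1))) + (-2)*X*(C α)^3*(C (n:ℝ))*(Lz α ((n:ℤ) - 2)) - X*(C α)^3*(C (n:ℝ))*(Lz α (n:ℤ)) + (3)*X*(C α)^3*(Lz α ((n:ℤ) - 1)) + (-16)*X*(C α)^3*(derivative (Lz α ((n:ℤ) - 1))) + (3)*X*(C α)^3*(derivative (Lz α ((n:ℤ) - 2))) + X*(C α)^3*(Lz α ((n:ℤ) - 3)) - X*(C α)^2*(C (n:ℝ))^2*(Lz α ((n:ℤ) - 2)) - X*(C α)^2*(C (n:ℝ))^2*(Lz α (n:ℤ)) + X*(C α)^2*(C (n:ℝ))*(Lz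 α ((n:ℤ) - 1)) - X*(C α)^2*(C (n:ℝ))*(Lz α (n:ℤ)) + (2)*X*(C α)^2*(C (n:ℝ))*(Lz α ((n:ℤ) - 3)) + (2)*X*(C α)^2*(Lz α ((n:ℤ) - 1)) + (-3)*X*(C α)^2*(Lz α ((n:ℤ) - 2)) + (-23)*X*(C α)^2*(derivative (Lz α ((n:ℤ) - 1))) + (13)*X*(C α)^2*(derivative (Lz α ((n:ℤ) - 2))) + (-2)*X*(C α)^2*(Lz α ((n:ℤ) - 3)) + X*(C α)*(C (n:ℝ))^2*(Lz α ((n:ℤ) - 1)) - X*(C α)*(C (n:ℝ))^2*(Lz α ((n:ℤ) - 2)) - X*(C α)*(C (n:ℝ))^2*(Lz α (n:ℤ)) + X*(C α)*(C (n:ℝ))^2*(Lz α ((n:ℤ) - 3)) + (2)*X*(C α)*(C (n:ℝ))*(Lz α ((n:ℤ) - 2)) + (-2)*X*(C α)*(C (n:ℝ))*(Lz α ((n:ℤ) - 3)) + (-10)*X*(C α)*(Lz α ((n:ℤ) - 2)) + (-10)*X*(C α)*(derivative (Lz α ((n:ℤ) - 1))) + (10)*X*(C α)*(derivative (Lz α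 ((n:ℤ) - 2)))) * h42
      + ((2)*X^3*(C (n:ℝ))^2*(Lz α ((n:ℤ) - 1)) + (-12)*X^3*(C (n:ℝ))*(Lz α ((n:ℤ) - 1)) + (10)*X^3*(Lz α ((n:ℤ) - 1)) + (4)*X^2*(C α)*(C (n:ℝ))^2*(Lz α ((n:ℤ) - 1)) + (-24)*X^2*(C α)*(C (n:ℝ))*(Lz α ((n:ℤ) - 1)) + (20)*X^2*(C α)*(Lz α ((n:ℤ) - 1)) + (2)*X^2*(C (n:ℝ))^2*(Lz α ((n:ℤ) - 1)) + (-2)*X^2*(C (n:ℝ))^2*(Lz α ((n:ℤ) - 2)) + (-12)*X^2*(C (n:ℝ))*(Lz α ((n:ℤ) - 1)) + (12)*X^2*(C (n:ℝ))*(Lz α ((n:ℤ) - 2)) + (10)*X^2*(Lz α ((n:ℤ) - 1)) + (-10)*X^2*(Lz α ((n:ℤ) - 2)) + (2)*X*(C α)^2*(C (n:ℝ))^2*(Lz α ((n:ℤ) - 1)) + (-12)*X*(C α)^2*(C (n:ℝ))*(Lz α ((n:ℤ) - 1)) + (10)*X*(C α)^2*(Lz α ((n:ℤ) - 1)) + (2)*X*(C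 α)*(C (n:ℝ))^2*(Lz α ((n:ℤ) - 1)) + (-2)*X*(C α)*(C (n:ℝ))^2*(Lz α ((n:ℤ) - 2)) + (-12)*X*(C α)*(C (n:ℝ))*(Lz α ((n:ℤ) - 1)) + (12)*X*(C α)*(C (n:ℝ))*(Lz α ((n:ℤ) - 2)) + (10)*X*(C α)*(Lz α ((n:ℤ) - 1)) + (-10)*X*(C α)*(Lz α ((n:ℤ) - 2))) * h21
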